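/- Let N = e·m where e = 2^f with f ≥ 1 and m is an odd integer with m > 1. Let c be an integer with c ≡ 0 (mod e) and c ≡ 1 (mod m), let x be an integer with 2x ≡ 1 (mod m), and set a = L^c and b = R^c in SL(2,ℤ). Then the element (a·b⁻¹·a)²·((b²·a^(−x))³)⁻¹ lies in Γ(N). -/

import Mathlib

open Matrix CongruenceSubgroup

local notation "SL2Z" => Matrix.SpecialLinearGroup (Fin 2) ℤ

/-- The matrix `L = [[1,0],[1,1]]` as an element of `SL(2, ℤ)`. -/
def L : SL2Z := ⟨!![1, 0; 1, 1], by norm_num [Matrix.det_fin_two_of]⟩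

/-- The matrix `R = [[1,1],[0,1]]` as an element of `SL(2, ℤ)`. -/
def R : SL2Z := ⟨!![1, 1; 0, 1], by norm_num [Matrix.det_fin_two_of]⟩

/-!
By the Chinese remainder theorem `Γ(2^f m) = Γ(2^f) ⊓ Γ(m)`. Modulo `2^f` both `a = L^c` and
`b = R^c` are trivial. Modulo `m` they reduce to `L` and `R`; there `L R⁻¹ L` has trace `0` and
`R² L^(-x)` has trace `2 - 2x = 1`, so by Cayley–Hamilton the square of the first and the cube of
the second are both `-1`.
-/

section Relator

variable {G : Type*} [Group G]

def relator (x : ℤ) (a b : G) : G :=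
  (a * b⁻¹ * a) ^ 2 * ((b ^ 2 * a ^ (-x)) ^ 3)⁻¹

lemma relator_mem {H : Subgroup G} (x : ℤ) {a b : G} (ha : a ∈ H) (hb : b ∈ H) :
    relator x a b ∈ H := by
  unfold relator
  apply_rules [Subgroup.mul_mem, Subgroup.inv_mem, Subgroup.pow_mem, Subgroup.zpow_mem]

lemma map_relator {G' : Type*} [Group G'] (φ : G →* G') (x : ℤ) (a b : G) :
    φ (relator x a b) = relator x (φ a) (φ b) := by
  simp only [relator, map_mul, map_inv, map_pow, map_zpow]

end Relator

lemma MonoidHom.map_zpow_eq_of_modEq {G H : Type*} [Group G] [Group H] (φ : G →* H) {g : G}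
    {N : ℤ} (hg : φ (g ^ N) = 1) {n n' : ℤ} (h : n ≡ n' [ZMOD N]) : φ (g ^ n) = φ (g ^ n') := by
  rw [map_zpow] at hg
  rw [map_zpow, map_zpow, zpow_eq_zpow_iff_modEq]
  exact h.of_dvd (orderOf_dvd_iff_zpow_eq_one.2 hg)

lemma ZMod.intCast_eq_intCast_iff_of_coprime {p q : ℕ} (h : p.Coprime q) (a b : ℤ) :
    (a : ZMod (p * q)) = b ↔ (a : ZMod p) = b ∧ (a : ZMod q) = b := by
  simp only [ZMod.intCast_eq_intCast_iff_dvd_sub, Nat.cast_mul]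
  exact ⟨fun hpq => ⟨dvd_of_mul_right_dvd hpq, dvd_of_mul_left_dvd hpq⟩,
    fun ⟨hp, hq⟩ => (Nat.isCoprime_iff_coprime.2 h).mul_dvd hp hq⟩

lemma CongruenceSubgroup.Gamma_mul_eq_inf_of_coprime {p q : ℕ} (h : p.Coprime q) :
    Gamma (p * q) = Gamma p ⊓ Gamma q := by
  ext g
  simp only [Subgroup.mem_inf, Gamma_mem, ← Int.cast_one (R := ZMod _),
    ← Int.cast_zero (R := ZMod _), ZMod.intCast_eq_intCast_iff_of_coprime h]
  tauto

namespace Matrix.SpecialLinearGroup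

variable {R : Type*} [CommRing R]

lemma coe_sq_eq_trace_smul_sub_one (g : SpecialLinearGroup (Fin 2) R) :
    (g : Matrix (Fin 2) (Fin 2) R) ^ 2 =
      (g : Matrix (Fin 2) (Fin 2) R).trace • (g : Matrix (Fin 2) (Fin 2) R) - 1 := by
  have hdet := g.det_coe
  rw [det_fin_two] at hdet
  ext i j
  fin_cases i <;> fin_cases j <;> simp [sq, mul_apply, Fin.sum_univ_two, trace_fin_two] <;>
    first | ring1 | linear_combination -hdet

lemma sq_eq_neg_one_of_trace_eq_zero {g : SpecialLinearGroup (Fin 2) R}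
    (hg : (g : Matrix (Fin 2) (Fin 2) R).trace = 0) : g ^ 2 = -1 := by
  ext1
  rw [coe_pow, coe_sq_eq_trace_smul_sub_one, hg, coe_neg, coe_one]
  simp

lemma pow_three_eq_neg_one_of_trace_eq_one {g : SpecialLinearGroup (Fin 2) R}
    (hg : (g : Matrix (Fin 2) (Fin 2) R).trace = 1) : g ^ 3 = -1 := by
  ext1
  rw [coe_pow, pow_succ, coe_sq_eq_trace_smul_sub_one, hg, coe_neg, coe_one, one_smul, sub_mul,
    ← sq, coe_sq_eq_trace_smul_sub_one, hg]
  simp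

lemma trace_coe_map {S : Type*} [CommRing S] (φ : R →+* S) (g : SpecialLinearGroup (Fin 2) R) :
    (map φ g : Matrix (Fin 2) (Fin 2) S).trace = φ (g : Matrix (Fin 2) (Fin 2) R).trace := by
  simp [trace_fin_two]

lemma relator_eq_one {x : ℤ} {a b : SpecialLinearGroup (Fin 2) R}
    (h₀ : ((a * b⁻¹ * a : SpecialLinearGroup (Fin 2) R) : Matrix (Fin 2) (Fin 2) R).trace = 0)
    (h₁ : ((b ^ 2 * a ^ (-x) : SpecialLinearGroup (Fin 2) R) : Matrix (Fin 2) (Fin 2) R).trace = 1) :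
    relator x a b = 1 := by
  rw [relator, sq_eq_neg_one_of_trace_eq_zero h₀, pow_three_eq_neg_one_of_trace_eq_one h₁]
  simp

end Matrix.SpecialLinearGroup

@[simp]
lemma coe_L : ((L : SL2Z) : Matrix (Fin 2) (Fin 2) ℤ) = !![1, 0; 1, 1] := rfl

@[simp]
lemma coe_R : ((R : SL2Z) : Matrix (Fin 2) (Fin 2) ℤ) = !![1, 1; 0, 1] := rfl

lemma coe_L_zpow (n : ℤ) : ((L ^ n : SL2Z) : Matrix (Fin 2) (Fin 2) ℤ) = !![1, 0; n, 1] := by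
  induction n using Int.induction_on with
  | zero => simp [one_fin_two]
  | succ k ih =>
    rw [_root_.zpow_add_one, Matrix.SpecialLinearGroup.coe_mul, ih]
    simp
  | pred k ih =>
    rw [_root_.zpow_sub_one, Matrix.SpecialLinearGroup.coe_mul, ih,
      Matrix.SpecialLinearGroup.coe_inv]
    simp [adjugate_fin_two_of]
    ring

lemma R_eq_T : R = ModularGroup.T := by
  ext i j
  rw [R, ModularGroup.T]

lemma coe_R_zpow (n : ℤ) : ((R ^ n : SL2Z) : Matrix (Fin 2) (Fin 2) ℤ) = !![1, n; 0, 1] := by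
  rw [R_eq_T, ModularGroup.coe_T_zpow]

lemma L_zpow_mem_Gamma {N : ℕ} {n : ℤ} (h : (N : ℤ) ∣ n) : L ^ n ∈ Gamma N := by
  simp [coe_L_zpow, ZMod.intCast_zmod_eq_zero_iff_dvd, h]

lemma R_zpow_mem_Gamma {N : ℕ} {n : ℤ} (h : (N : ℤ) ∣ n) : R ^ n ∈ Gamma N := by
  simp [coe_R_zpow, ZMod.intCast_zmod_eq_zero_iff_dvd, h]

lemma relator_L_R_mem_Gamma {m : ℕ} {x : ℤ} (hx : 2 * x ≡ 1 [ZMOD m]) :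
    relator x L R ∈ Gamma m := by
  have hx' : 2 * (x : ZMod m) = 1 := by
    simpa using (ZMod.intCast_eq_intCast_iff _ _ _).2 hx
  rw [Gamma_mem', map_relator]
  apply Matrix.SpecialLinearGroup.relator_eq_one
  · rw [← map_inv, ← map_mul, ← map_mul, Matrix.SpecialLinearGroup.trace_coe_map]
    simp [Matrix.SpecialLinearGroup.coe_inv, adjugate_fin_two_of, trace_fin_two]
  · rw [← map_pow, ← map_zpow, ← map_mul, Matrix.SpecialLinearGroup.trace_coe_map,
      ← zpow_natCast, Matrix.SpecialLinearGroup.coe_mul, coe_L_zpow, coe_R_zpow]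
    simp [trace_fin_two]
    linear_combination -hx'

lemma relator_L_zpow_R_zpow_mem_Gamma {m : ℕ} {c x : ℤ} (hc : c ≡ 1 [ZMOD m])
    (hx : 2 * x ≡ 1 [ZMOD m]) : relator x (L ^ c) (R ^ c) ∈ Gamma m := by
  set φ : SL2Z →* Matrix.SpecialLinearGroup (Fin 2) (ZMod m) :=
    Matrix.SpecialLinearGroup.map (Int.castRingHom _)
  have hL : φ (L ^ c) = φ L := by
    simpa using φ.map_zpow_eq_of_modEq (L_zpow_mem_Gamma dvd_rfl) hc
  have hR : φ (R ^ c) = φ R := by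
    simpa using φ.map_zpow_eq_of_modEq (R_zpow_mem_Gamma dvd_rfl) hc
  rw [Gamma_mem', map_relator, hL, hR, ← map_relator]
  exact relator_L_R_mem_Gamma hx

theorem stmt_7_general (f : ℕ) (m : ℕ) (hmodd : Odd m)
    (c : ℤ) (hc0 : c ≡ 0 [ZMOD ((2 : ℤ) ^ f)]) (hc1 : c ≡ 1 [ZMOD (m : ℤ)])
    (x : ℤ) (hx : 2 * x ≡ 1 [ZMOD (m : ℤ)])
    (a b : SL2Z) (ha : a = L ^ c) (hb : b = R ^ c) :
    (a * b⁻¹ * a) ^ 2 * ((b ^ 2 * a ^ (-x)) ^ 3)⁻¹ ∈ Gamma (2 ^ f * m) := by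
  subst ha hb
  have hdvd : ((2 ^ f : ℕ) : ℤ) ∣ c := by exact_mod_cast Int.modEq_zero_iff_dvd.1 hc0
  rw [Gamma_mul_eq_inf_of_coprime (Nat.Coprime.pow_left f (Nat.coprime_two_left.2 hmodd))]
  exact ⟨relator_mem x (L_zpow_mem_Gamma hdvd) (R_zpow_mem_Gamma hdvd),
    relator_L_zpow_R_zpow_mem_Gamma hc1 hx⟩

theorem stmt_7 (f : ℕ) (hf : 1 ≤ f) (m : ℕ) (hmodd : Odd m) (hm1 : 1 < m)
    (c : ℤ) (hc0 : c ≡ 0 [ZMOD ((2 : ℤ) ^ f)]) (hc1 : c ≡ 1 [ZMOD (m : ℤ)])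
    (x : ℤ) (hx : 2 * x ≡ 1 [ZMOD (m : ℤ)])
    (a b : SL2Z) (ha : a = L ^ c) (hb : b = R ^ c) :
    (a * b⁻¹ * a) ^ 2 * ((b ^ 2 * a ^ (-x)) ^ 3)⁻¹ ∈ Gamma (2 ^ f * m) :=
  stmt_7_general f m hmodd c hc0 hc1 x hx a b ha hb
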